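/- Let k be a field, f ∈ k[x] a monic polynomial of degree d, and m a divisor of d with 1 < m < d such that m is invertible in k (char k = 0 or char k does not divide m). Let f = u(g) + h be the m-decomposition of f in k[x]. Then f is m-decomposable in k[x] (i.e., f = U(G) for some monic U, G ∈ k[x] with deg(U) = m) if and only if h = 0. -/
import Mathlib


open Polynomial

section Aux

variable {k : Type*} [Field k]

/-- Coefficient of `x^(m-1)` after a Tschirnhaus shift. -/
private lemma coeff_comp_X_sub_C_aux (m : ℕ) (hm1 : 1 < m) (U : Polynomial k)
    (hU : U.Monic) (hum : U.natDegree = m) (c : k) :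
    (U.comp (X - C c)).coeff (m - 1) = U.coeff (m - 1) - m * c := by
  have h1 : U.comp (X - C c) = taylor (-c) U := by
    rw [taylor_apply, map_neg, sub_eq_add_neg]
  rw [h1, taylor_coeff]
  have hd : (hasseDeriv (m - 1) U).natDegree < 2 := by
    have := natDegree_hasseDeriv_le U (m - 1)
    omega
  rw [eval_eq_sum_range' hd, Finset.sum_range_succ, Finset.sum_range_one,
    hasseDeriv_coeff, hasseDeriv_coeff]
  have e0 : (0 + (m - 1)).choose (m - 1) = 1 := by
    rw [zero_add, Nat.choose_self]
  have e1 : 1 + (m - 1) = m := by omega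
  have e2 : m.choose (m - 1) = m := by
    have : m - 1 = m - 1 := rfl
    have := Nat.choose_symm (show 1 ≤ m by omega)
    simpa using this
  have e3 : U.coeff m = 1 := by
    rw [← hum]; exact hU.coeff_natDegree
  rw [e0, e1, e2, e3]
  push_cast
  ring

/-- If `v ∘ g = h₂ - h₁` where both `h`'s vanish at coefficients whose index is a multiple of
`deg g > 0`, then `v = 0`. -/
private lemma comp_cancel_aux (g : Polynomial k) (hg : g.Monic) (hge : g.natDegree ≠ 0)
    (v h₁ h₂ : Polynomial k)
    (hc1 : ∀ i, g.natDegree ∣ i → h₁.coeff i = 0)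
    (hc2 : ∀ i, g.natDegree ∣ i → h₂.coeff i = 0)
    (heq : v.comp g = h₂ - h₁) : v = 0 := by
  by_contra hv
  have key := coeff_comp_degree_mul_degree (p := v) hge
  rw [heq] at key
  have hzero : (h₂ - h₁).coeff (v.natDegree * g.natDegree) = 0 := by
    rw [coeff_sub, hc1 _ ⟨v.natDegree, (mul_comm _ _)⟩, hc2 _ ⟨v.natDegree, (mul_comm _ _)⟩,
      sub_zero]
  rw [hzero, hg.leadingCoeff, one_pow, mul_one] at key
  exact hv (leadingCoeff_eq_zero.mp key.symm)

/-- Uniqueness of the inner polynomial in an `m`-decomposition. -/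
private lemma g_uniq_aux (m e : ℕ) (hm1 : 1 < m) (he : 0 < e) (hminv : (m : k) ≠ 0)
    (u₁ u₂ g₁ g₂ h₁ h₂ : Polynomial k)
    (hg₁ : g₁.Monic) (hg₂ : g₂.Monic)
    (hu₁m : u₁.natDegree = m) (hu₂m : u₂.natDegree = m)
    (hu₁ : u₁.Monic) (hu₂ : u₂.Monic)
    (hu₁c : u₁.coeff (m - 1) = 0) (hu₂c : u₂.coeff (m - 1) = 0)
    (hg₁e : g₁.natDegree = e) (hg₂e : g₂.natDegree = e)
    (hh₁ : h₁.degree < (((m - 1) * e : ℕ) : WithBot ℕ))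
    (hh₂ : h₂.degree < (((m - 1) * e : ℕ) : WithBot ℕ))
    (heq : u₁.comp g₁ + h₁ = u₂.comp g₂ + h₂) : g₁ = g₂ := by
  by_contra hne
  have hw : g₁ - g₂ ≠ 0 := sub_ne_zero.mpr hne
  set w := g₁ - g₂ with hwdef
  set t := w.natDegree with htdef
  set N := t + (m - 1) * e with hNdef
  -- the "error" terms
  have hsub : ∀ (u : Polynomial k), u.Monic → u.natDegree = m → u.coeff (m - 1) = 0 →
      (u - X ^ m).natDegree ≤ m - 2 := by
    intro u hu hum huc
    rw [natDegree_le_iff_coeff_eq_zero]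
    intro i hi
    rw [coeff_sub, coeff_X_pow]
    rcases lt_trichotomy i m with h | h | h
    · have : i = m - 1 := by omega
      subst this
      rw [huc, if_neg (by omega), sub_zero]
    · subst h
      rw [if_pos rfl, ← hum, hu.coeff_natDegree, sub_self]
    · rw [if_neg (by omega), coeff_eq_zero_of_natDegree_lt (by omega), sub_zero]
  have hr : ∀ (u g : Polynomial k), u.Monic → u.natDegree = m → u.coeff (m - 1) = 0 →
      g.natDegree = e → ((u - X ^ m).comp g).natDegree ≤ (m - 2) * e := by
    intro u g hu hum huc hge
    calc ((u - X ^ m).comp g).natDegree ≤ (u - X ^ m).natDegree * g.natDegree :=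
          natDegree_comp_le
      _ ≤ (m - 2) * e := by
          rw [hge]
          exact Nat.mul_le_mul_right _ (hsub u hu hum huc)
  -- key identity
  have key : g₁ ^ m - g₂ ^ m =
      ((u₂ - X ^ m).comp g₂ - (u₁ - X ^ m).comp g₁) + (h₂ - h₁) := by
    have e1 : u₁.comp g₁ = g₁ ^ m + (u₁ - X ^ m).comp g₁ := by
      rw [sub_comp, X_pow_comp]; ring
    have e2 : u₂.comp g₂ = g₂ ^ m + (u₂ - X ^ m).comp g₂ := by
      rw [sub_comp, X_pow_comp]; ring
    rw [e1, e2] at heq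
    linear_combination heq
  -- factor left side
  have hfac : (∑ i ∈ Finset.range m, g₁ ^ i * g₂ ^ (m - 1 - i)) * w = g₁ ^ m - g₂ ^ m :=
    geom_sum₂_mul g₁ g₂ m
  set S := ∑ i ∈ Finset.range m, g₁ ^ i * g₂ ^ (m - 1 - i) with hSdef
  have hSdeg : S.natDegree ≤ (m - 1) * e := by
    apply natDegree_sum_le_of_forall_le
    intro i hi
    have : (g₁ ^ i * g₂ ^ (m - 1 - i)).natDegree = i * e + (m - 1 - i) * e := by
      rw [(hg₁.pow i).natDegree_mul (hg₂.pow _), natDegree_pow, natDegree_pow, hg₁e, hg₂e]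
    rw [this, ← add_mul, show i + (m - 1 - i) = m - 1 from by
      simp only [Finset.mem_range] at hi; omega]
  have hScoeff : S.coeff ((m - 1) * e) = (m : k) := by
    rw [hSdef, finset_sum_coeff]
    have : ∀ i ∈ Finset.range m, (g₁ ^ i * g₂ ^ (m - 1 - i)).coeff ((m - 1) * e) = 1 := by
      intro i hi
      have hmon : (g₁ ^ i * g₂ ^ (m - 1 - i)).Monic := (hg₁.pow i).mul (hg₂.pow _)
      have hdeg : (g₁ ^ i * g₂ ^ (m - 1 - i)).natDegree = (m - 1) * e := by
        rw [(hg₁.pow i).natDegree_mul (hg₂.pow _), natDegree_pow, natDegree_pow, hg₁e, hg₂e]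
        have : i ≤ m - 1 := by
          simp only [Finset.mem_range] at hi; omega
        calc i * e + (m - 1 - i) * e = (i + (m - 1 - i)) * e := by ring
          _ = (m - 1) * e := by congr 1; omega
      rw [← hdeg]
      exact hmon.coeff_natDegree
    rw [Finset.sum_congr rfl this, Finset.sum_const, Finset.card_range, nsmul_eq_mul, mul_one]
  have hSne : S ≠ 0 := fun h0 => hminv (by rw [← hScoeff, h0, coeff_zero])
  have hSdeg' : S.natDegree = (m - 1) * e :=
    le_antisymm hSdeg (le_natDegree_of_ne_zero (hScoeff ▸ hminv))
  have hSlead : S.leadingCoeff = (m : k) := by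
    rw [leadingCoeff, hSdeg', hScoeff]
  -- coefficient of the LHS at N is nonzero
  have hLHS : (g₁ ^ m - g₂ ^ m).coeff N = (m : k) * w.leadingCoeff := by
    rw [← hfac]
    have hdeg : (S * w).natDegree = N := by
      rw [natDegree_mul hSne hw, hSdeg', hNdef]; ring
    have : (S * w).coeff N = (S * w).leadingCoeff := by rw [leadingCoeff, hdeg]
    rw [this, leadingCoeff_mul, hSlead]
  -- coefficient of the RHS at N is zero
  have hRHS : (((u₂ - X ^ m).comp g₂ - (u₁ - X ^ m).comp g₁) + (h₂ - h₁)).coeff N = 0 := by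
    have hlt : (m - 2) * e < N := by
      have h1 : (m - 2) * e < (m - 1) * e := (Nat.mul_lt_mul_right he).mpr (by omega)
      exact lt_of_lt_of_le h1 (Nat.le_add_left _ _)
    have hhlt : ∀ (p : Polynomial k), p.degree < (((m - 1) * e : ℕ) : WithBot ℕ) →
        p.coeff N = 0 := by
      intro p hp
      apply coeff_eq_zero_of_degree_lt
      refine lt_of_lt_of_le hp ?_
      exact_mod_cast Nat.cast_le.mpr (Nat.le_add_left _ _)
    rw [coeff_add, coeff_sub, coeff_sub,
      coeff_eq_zero_of_natDegree_lt (lt_of_le_of_lt (hr u₂ g₂ hu₂ hu₂m hu₂c hg₂e) hlt),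
      coeff_eq_zero_of_natDegree_lt (lt_of_le_of_lt (hr u₁ g₁ hu₁ hu₁m hu₁c hg₁e) hlt),
      hhlt h₂ hh₂, hhlt h₁ hh₁]
    ring
  rw [key, hRHS] at hLHS
  exact hw (leadingCoeff_eq_zero.mp (by
    rcases mul_eq_zero.mp hLHS.symm with h | h
    · exact absurd h hminv
    · exact h))

end Aux

/-- **Criterion for `m`-decomposability via the `m`-decomposition.** Let `k` be a field,
`f ∈ k[x]` monic of degree `d`, and `m` a divisor of `d` with `1 < m < d`, invertible in `k`.
Let `f = u(g) + h` be the `m`-decomposition of `f` (its defining properties are listed as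
hypotheses). Then `f` is `m`-decomposable in `k[x]`, i.e. `f = U(G)` with `U, G ∈ k[x]` monic
and `deg U = m`, if and only if `h = 0`. -/
theorem mDecomposable_iff_remainder_eq_zero (k : Type*) [Field k]
    (f u g h : Polynomial k) (d m : ℕ)
    (hf : f.Monic) (hdeg : f.natDegree = d)
    (hmd : m ∣ d) (hm1 : 1 < m) (hm2 : m < d)
    (hminv : (m : k) ≠ 0)
    (hdec : f = u.comp g + h)
    (hu : u.Monic) (hg : g.Monic)
    (hum : u.natDegree = m) (huc : u.coeff (m - 1) = 0)
    (hh : h.degree < ((d - d / m : ℕ) : WithBot ℕ))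
    (hhc : ∀ i : ℕ, g.natDegree ∣ i → h.coeff i = 0) :
    (∃ U G : Polynomial k, U.Monic ∧ G.Monic ∧ U.natDegree = m ∧ f = U.comp G) ↔ h = 0 := by
  constructor
  · rintro ⟨U, G, hU, hG, hUm, hfUG⟩
    -- basic numerics
    obtain ⟨e, hde⟩ := hmd
    have hm0 : 0 < m := by omega
    have hdm : d / m = e := by rw [hde, Nat.mul_div_cancel_left _ hm0]
    rw [hdm] at hh
    have he : 0 < e := by
      rcases Nat.eq_zero_or_pos e with h0 | h0
      · subst h0; omega
      · exact h0
    have hdme : d - e = (m - 1) * e := by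
      rw [hde, Nat.sub_one_mul]
    -- degrees of g and G
    have hgdeg : g.natDegree = e := by
      have hfd : f.degree = (d : WithBot ℕ) := by
        rw [degree_eq_natDegree hf.ne_zero, hdeg]
      have hhd : h.degree < f.degree := by
        rw [hfd]
        exact lt_of_lt_of_le hh (by exact_mod_cast Nat.cast_le.mpr (Nat.sub_le d e))
      have hcomp : u.comp g = f - h := by rw [hdec]; ring
      have : (u.comp g).degree = (d : WithBot ℕ) := by
        rw [hcomp, degree_sub_eq_left_of_degree_lt hhd, hfd]
      have hnd : (u.comp g).natDegree = d := natDegree_eq_of_degree_eq_some this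
      rw [natDegree_comp, hum] at hnd
      have : m * g.natDegree = m * e := by omega
      exact Nat.eq_of_mul_eq_mul_left (by omega) this
    have hGdeg : G.natDegree = e := by
      have h1 : m * G.natDegree = d := by
        rw [← hdeg, hfUG, natDegree_comp, hUm]
      rw [hde] at h1
      exact Nat.eq_of_mul_eq_mul_left (by omega) h1
    -- Tschirnhaus normalization
    set c := U.coeff (m - 1) / m with hcdef
    set U' := U.comp (X - C c) with hU'def
    set G' := G + C c with hG'def
    have hU'mon : U'.Monic := hU.comp_X_sub_C c
    have hU'deg : U'.natDegree = m := by
      rw [hU'def, natDegree_comp, natDegree_X_sub_C, mul_one, hUm]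
    have hU'c : U'.coeff (m - 1) = 0 := by
      rw [hU'def, coeff_comp_X_sub_C_aux m hm1 U hU hUm, hcdef,
        mul_div_cancel₀ _ hminv, sub_self]
    have hG'mon : G'.Monic := by
      apply hG.add_of_left
      apply lt_of_le_of_lt (degree_C_le)
      rw [degree_eq_natDegree hG.ne_zero, hGdeg]
      exact_mod_cast Nat.cast_pos.mpr he
    have hG'deg : G'.natDegree = e := by
      rw [hG'def, natDegree_add_C, hGdeg]
    have hcomp : U'.comp G' = f := by
      rw [hU'def, comp_assoc]
      have : (X - C c).comp G' = G := by
        rw [sub_comp, X_comp, C_comp, hG'def, add_sub_cancel_right]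
      rw [this, hfUG]
    -- apply uniqueness of g
    have heq : u.comp g + h = U'.comp G' + 0 := by
      rw [add_zero, hcomp, ← hdec]
    have hh' : h.degree < (((m - 1) * e : ℕ) : WithBot ℕ) := by
      rw [← hdme]; exact hh
    have hgG : g = G' := by
      apply g_uniq_aux m e hm1 he hminv u U' g G' h 0 hg hG'mon hum hU'deg hu hU'mon huc hU'c
        hgdeg hG'deg hh' _ heq
      rw [degree_zero]
      exact WithBot.bot_lt_coe _
    -- cancel the outer polynomials
    have heq2 : (U' - u).comp g = h := by
      rw [← hgG] at heq
      rw [sub_comp]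
      linear_combination -heq
    have hv : U' - u = 0 := by
      apply comp_cancel_aux g hg (by omega : g.natDegree ≠ 0) (U' - u) 0 h
        (fun i _ => coeff_zero i) (fun i hi => hhc i hi)
      rw [heq2, sub_zero]
    rw [← heq2, hv, zero_comp]
  · intro h0
    exact ⟨u, g, hu, hg, hum, by rw [hdec, h0, add_zero]⟩
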